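/- Let f : ℝ^d → ℝ be continuously differentiable with f(x) ≥ 0 for all x, satisfying the Polyak–Łojasiewicz condition ‖∇f(x)‖₂² ≥ μ f(x) for all x, with μ > 0. Let x : [0,∞) → ℝ^d be differentiable with ẋ_i(t) = −sign(∂_i f(x(t))) for every coordinate i and every t ≥ 0, started from x(0) = x₀. Then continuous-time signGD reaches the global minimum in finite time: f(x(t*)) = 0 at the time t* = 2√(f(x₀))/√μ. -/

import Mathlib

/-!
Along the flow, `(f ∘ x)' = ⟪∇f, -sign ∇f⟫ = -‖∇f‖₁ ≤ -‖∇f‖₂ ≤ -√(μ f)`. Hence, as long as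
`f (x t) > 0`, `√(f (x t))` decreases at rate at least `√μ / 2`, so starting from `√(f x₀)` it
must reach `0` by time `2 √(f x₀) / √μ`.
-/

open Real Set

lemma Real.self_mul_sign (a : ℝ) : a * sign a = |a| := by
  rcases lt_trichotomy a 0 with h | rfl | h
  · rw [sign_of_neg h, abs_of_neg h, mul_neg_one]
  · simp
  · rw [sign_of_pos h, abs_of_pos h, mul_one]

namespace EuclideanSpace

variable {ι : Type*} [Fintype ι]

lemma norm_le_sum_abs (v : EuclideanSpace ℝ ι) : ‖v‖ ≤ ∑ i, |v i| := by
  rw [EuclideanSpace.norm_eq, sqrt_le_left (Finset.sum_nonneg fun i _ => abs_nonneg _)]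
  exact Finset.sum_sq_le_sq_sum_of_nonneg fun i _ => abs_nonneg _

lemma inner_neg_sign_le_neg_norm (v : EuclideanSpace ℝ ι) :
    inner ℝ v (WithLp.toLp 2 fun i => -sign (v i)) ≤ -‖v‖ := by
  have h : inner ℝ v (WithLp.toLp 2 fun i => -sign (v i)) = -∑ i, |v i| := by
    simp [PiLp.inner_apply, ← Real.self_mul_sign, mul_comm]
  rw [h, neg_le_neg_iff]
  exact norm_le_sum_abs v

lemma hasDerivAt_iff {x : ℝ → EuclideanSpace ℝ ι} {v : EuclideanSpace ℝ ι} {t : ℝ} :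
    HasDerivAt x v t ↔ ∀ i, HasDerivAt (fun s => x s i) (v i) t := by
  let e := PiLp.continuousLinearEquiv 2 ℝ fun _ : ι => ℝ
  refine ⟨fun h => hasDerivAt_pi.1 (e.hasFDerivAt.comp_hasDerivAt t h), fun h => ?_⟩
  exact e.symm.hasFDerivAt.comp_hasDerivAt t (hasDerivAt_pi.2 h)

end EuclideanSpace

lemma HasGradientAt.comp_hasDerivAt {F : Type*} [NormedAddCommGroup F] [InnerProductSpace ℝ F]
    [CompleteSpace F] {f : F → ℝ} {g : F} {x : ℝ → F} {v : F} {t : ℝ}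
    (hf : HasGradientAt f g (x t)) (hx : HasDerivAt x v t) :
    HasDerivAt (fun s => f (x s)) (inner ℝ g v) t :=
  HasFDerivAt.comp_hasDerivAt t hf hx

section SqrtDecay

variable {g g' : ℝ → ℝ} {a b c : ℝ}

lemma sqrt_add_mul_le_sqrt_of_hasDerivAt_le (hab : a ≤ b)
    (hderiv : ∀ t ∈ Icc a b, HasDerivAt g (g' t) t) (hpos : ∀ t ∈ Icc a b, 0 < g t)
    (hle : ∀ t ∈ Icc a b, g' t ≤ -(c * √(g t))) :
    √(g b) + c / 2 * (b - a) ≤ √(g a) := by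
  have hlyap : ∀ t ∈ Icc a b,
      HasDerivAt (fun s => √(g s) + c / 2 * s) (g' t / (2 * √(g t)) + c / 2) t := fun t ht => by
    simpa using ((hderiv t ht).sqrt (hpos t ht).ne').fun_add ((hasDerivAt_id' t).const_mul (c / 2))
  have hlyap_nonpos : ∀ t ∈ Icc a b, g' t / (2 * √(g t)) + c / 2 ≤ 0 := fun t ht => by
    have hsqrt : 0 < √(g t) := sqrt_pos.2 (hpos t ht)
    have : g' t / (2 * √(g t)) ≤ -(c / 2) := by
      rw [div_le_iff₀ (by positivity)]
      linarith [hle t ht]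
    linarith
  have hanti : AntitoneOn (fun s => √(g s) + c / 2 * s) (Icc a b) :=
    antitoneOn_of_hasDerivWithinAt_nonpos (convex_Icc a b)
      (fun t ht => (hlyap t ht).continuousAt.continuousWithinAt)
      (fun t ht => (hlyap t (interior_subset ht)).hasDerivWithinAt)
      (fun t ht => hlyap_nonpos t (interior_subset ht))
  have := hanti (left_mem_Icc.2 hab) (right_mem_Icc.2 hab) hab
  dsimp only at this
  linarith

lemma eq_zero_of_hasDerivAt_le_neg_mul_sqrt (hc : 0 ≤ c) (hab : a ≤ b)
    (hduration : 2 * √(g a) ≤ c * (b - a))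
    (hderiv : ∀ t ∈ Icc a b, HasDerivAt g (g' t) t)
    (hle : ∀ t ∈ Icc a b, g' t ≤ -(c * √(g t))) (hgb : 0 ≤ g b) :
    g b = 0 := by
  by_contra hne
  have hgb_pos : 0 < g b := hgb.lt_of_ne' hne
  have hanti : AntitoneOn g (Icc a b) :=
    antitoneOn_of_hasDerivWithinAt_nonpos (convex_Icc a b)
      (fun t ht => (hderiv t ht).continuousAt.continuousWithinAt)
      (fun t ht => (hderiv t (interior_subset ht)).hasDerivWithinAt)
      (fun t ht => (hle t (interior_subset ht)).trans (by simp only [neg_nonpos]; positivity))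
  have hpos : ∀ t ∈ Icc a b, 0 < g t := fun t ht =>
    hgb_pos.trans_le (hanti ht (right_mem_Icc.2 hab) ht.2)
  have := sqrt_add_mul_le_sqrt_of_hasDerivAt_le hab hderiv hpos hle
  linarith [sqrt_pos.2 hgb_pos]

end SqrtDecay

/-- Under the PL condition `‖∇f(x)‖² ≥ μ f(x)` (with `μ > 0`, `f ≥ 0`), continuous-time
signGD `ẋ = −sign(∇f(x))` reaches the global minimum in finite time:
`f(x(t*)) = 0` at `t* = 2√f(x₀)/√μ`. -/
theorem signGD_finite_time_convergence
    (d : ℕ) (f : EuclideanSpace ℝ (Fin d) → ℝ)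
    (hf : ContDiff ℝ 1 f)
    (hfnonneg : ∀ z, 0 ≤ f z)
    (μ : ℝ) (hμ : 0 < μ)
    (hPL : ∀ z, μ * f z ≤ ‖gradient f z‖ ^ 2)
    (x₀ : EuclideanSpace ℝ (Fin d))
    (x : ℝ → EuclideanSpace ℝ (Fin d))
    (hx0 : x 0 = x₀)
    (hx : ∀ t : ℝ, 0 ≤ t → ∀ i,
      HasDerivAt (fun s => x s i) (-Real.sign (gradient f (x t) i)) t) :
    f (x (2 * Real.sqrt (f x₀) / Real.sqrt μ)) = 0 := by
  set T := 2 * √(f x₀) / √μ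
  have hsqrtμ : 0 < √μ := sqrt_pos.2 hμ
  have hflow : ∀ t ∈ Icc 0 T, HasDerivAt (fun s => f (x s))
      (inner ℝ (gradient f (x t)) (WithLp.toLp 2 fun i => -sign (gradient f (x t) i))) t :=
    fun t ht => ((hf.differentiable one_ne_zero (x t)).hasGradientAt).comp_hasDerivAt
      (EuclideanSpace.hasDerivAt_iff.2 (hx t ht.1))
  have hdecay : ∀ t ∈ Icc 0 T,
      inner ℝ (gradient f (x t)) (WithLp.toLp 2 fun i => -sign (gradient f (x t) i)) ≤
        -(√μ * √(f (x t))) := fun t _ => by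
    have hPL_sqrt : √μ * √(f (x t)) ≤ ‖gradient f (x t)‖ := by
      rw [← sqrt_mul hμ.le, sqrt_le_left (norm_nonneg _)]
      exact hPL (x t)
    linarith [EuclideanSpace.inner_neg_sign_le_neg_norm (gradient f (x t))]
  have hT : 2 * √(f (x 0)) ≤ √μ * (T - 0) := by
    rw [sub_zero, mul_div_cancel₀ _ hsqrtμ.ne', hx0]
  exact eq_zero_of_hasDerivAt_le_neg_mul_sqrt hsqrtμ.le (by positivity) hT hflow hdecay
    (hfnonneg _)
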